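/- Let He_n denote the probabilists' Hermite polynomial of order n (defined by He_0 = 1 and He_{n+1} = X·He_n − He_n′), and define φ_n : ℝ → ℝ by φ_n(x) = He_n(√2·x)·exp(−x²/2). Then φ_n is an eigenfunction of the quantum harmonic-oscillator Hamiltonian H = (1/2)·(−d²/dx² + x²) with eigenvalue E_n = n + 1/2: for every x ∈ ℝ, −(1/2)·φ_n″(x) + (1/2)·x²·φ_n(x) = (n + 1/2)·φ_n(x). -/

import Mathlib

/-!
The Hermite polynomials satisfy `He_{n+1}' = (n + 1) He_n`, which together with the recursion
gives the Hermite equation `He_n'' = X He_n' - n He_n`. Conjugating by the Gaussian,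
`(u e^{-x²/2})'' = (u'' - 2x u' + (x² - 1) u) e^{-x²/2}`, and for `u(x) = He_n(√2 x)` the
Hermite equation reads `u'' - 2x u' = -2n u`, so `-φ_n'' + x² φ_n = (2n + 1) φ_n`.
-/

/-- The unnormalized `n`-th harmonic-oscillator eigenfunction
`φ_n(x) = He_n(√2·x)·exp(−x²/2)`, where `He_n` is the probabilists' Hermite
polynomial of order `n`. -/
noncomputable def oscillatorEigenfunction (n : ℕ) (x : ℝ) : ℝ :=
  (Polynomial.aeval (Real.sqrt 2 * x) (Polynomial.hermite n)) * Real.exp (-(x ^ 2) / 2)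

open Polynomial Real

namespace Polynomial

theorem derivative_hermite_succ (n : ℕ) :
    derivative (hermite (n + 1)) = ((n + 1 : ℕ) : ℤ[X]) * hermite n := by
  induction n with
  | zero => simp [hermite_succ]
  | succ n ih =>
    rw [hermite_succ (n + 1), derivative_sub, derivative_mul, derivative_X, ih,
      derivative_natCast_mul, hermite_succ n]
    push_cast
    ring

theorem derivative_derivative_hermite (n : ℕ) :
    derivative (derivative (hermite n)) = X * derivative (hermite n) - (n : ℤ[X]) * hermite n := by
  have h := derivative_hermite_succ n
  rw [hermite_succ n, derivative_sub, derivative_mul, derivative_X] at h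
  push_cast at h
  linear_combination -h

theorem hasDerivAt_aeval_const_mul {𝕜 R : Type*} [NontriviallyNormedField 𝕜] [CommSemiring R]
    [Algebra R 𝕜] (q : R[X]) (a x : 𝕜) :
    HasDerivAt (fun x => aeval (a * x) q) (a * aeval (a * x) (derivative q)) x := by
  have h := (q.hasDerivAt_aeval (a * x)).comp x ((hasDerivAt_id' x).const_mul a)
  rwa [mul_one, mul_comm] at h

end Polynomial

theorem hasDerivAt_mul_exp_neg_sq_div_two {u u' : ℝ → ℝ} {x : ℝ} (hu : HasDerivAt u (u' x) x) :
    HasDerivAt (fun x => u x * exp (-(x ^ 2) / 2)) ((u' x - x * u x) * exp (-(x ^ 2) / 2)) x := by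
  have hexp : HasDerivAt (fun x => exp (-(x ^ 2) / 2)) (exp (-(x ^ 2) / 2) * (-(2 * x ^ 1) / 2)) x :=
    (((hasDerivAt_pow 2 x).neg).div_const 2).exp
  exact (hu.mul hexp).congr_deriv (by ring)

theorem deriv_deriv_mul_exp_neg_sq_div_two {u u' u'' : ℝ → ℝ} (hu : ∀ x, HasDerivAt u (u' x) x)
    (hu' : ∀ x, HasDerivAt u' (u'' x) x) (x : ℝ) :
    deriv (deriv fun x => u x * exp (-(x ^ 2) / 2)) x =
      (u'' x - 2 * x * u' x + (x ^ 2 - 1) * u x) * exp (-(x ^ 2) / 2) := by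
  have hfirst : deriv (fun x => u x * exp (-(x ^ 2) / 2)) =
      fun x => (u' x - x * u x) * exp (-(x ^ 2) / 2) :=
    funext fun x => (hasDerivAt_mul_exp_neg_sq_div_two (hu x)).deriv
  have hfirst' : HasDerivAt (fun x => u' x - x * u x) (u'' x - (u x + x * u' x)) x :=
    ((hu' x).sub ((hasDerivAt_id' x).mul (hu x))).congr_deriv (by ring)
  rw [hfirst, (hasDerivAt_mul_exp_neg_sq_div_two
    (u' := fun x => u'' x - (u x + x * u' x)) hfirst').deriv]
  ring

theorem harmonic_oscillator_eigenvalue (n : ℕ) (x : ℝ) :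
    -(1 / 2 : ℝ) * deriv (deriv (oscillatorEigenfunction n)) x +
      (1 / 2 : ℝ) * x ^ 2 * oscillatorEigenfunction n x =
    ((n : ℝ) + 1 / 2) * oscillatorEigenfunction n x := by
  have hφ'' := deriv_deriv_mul_exp_neg_sq_div_two
    (fun x => hasDerivAt_aeval_const_mul (hermite n) √2 x)
    (fun x => (hasDerivAt_aeval_const_mul (derivative (hermite n)) √2 x).const_mul √2) x
  have hode : aeval (√2 * x) (derivative (derivative (hermite n))) =
      √2 * x * aeval (√2 * x) (derivative (hermite n)) - n * aeval (√2 * x) (hermite n) := by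
    simp [derivative_derivative_hermite]
  have hsqrt : √2 ^ 2 = 2 := sq_sqrt zero_le_two
  unfold oscillatorEigenfunction
  rw [hφ'']
  linear_combination (-(1 / 2 : ℝ) * exp (-(x ^ 2) / 2)) *
    (2 * hode + aeval (√2 * x) (derivative (derivative (hermite n))) * hsqrt)
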